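/- Let L be a positive integer and let X = ℝ₊^L. Let ≽ be a homothetic preorder on X that is an extension of the componentwise order on X (i.e., if xᵢ ≥ yᵢ for all i then x ≽ y, and if in addition x ≠ y then x ≻ y). Then ≽ has an extension to a complete preorder ≽' on X that is homothetic and monotone (i.e., xᵢ ≥ yᵢ for all i implies x ≽' y, and if in addition x ≠ y then x ≻' y). -/
import Mathlib


/-- The strict part of a binary relation: `x ≻ y` iff `x ≽ y` and not `y ≽ x`. -/
def StrictRel {X : Type*} (R : X → X → Prop) (x y : X) : Prop := R x y ∧ ¬ R y x

/-- `R'` is an extension of `R`. -/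
def IsExtension {X : Type*} (R R' : X → X → Prop) : Prop :=
  (∀ x y, R x y → R' x y) ∧ (∀ x y, StrictRel R x y → StrictRel R' x y)

/-- The nonnegative orthant `ℝ₊^L`. -/
def Orth (L : ℕ) : Type := {x : Fin L → ℝ // ∀ i, 0 ≤ x i}

/-- Scaling a point of the orthant by a nonnegative scalar. -/
def oscale {L : ℕ} (a : ℝ) (ha : 0 ≤ a) (x : Orth L) : Orth L :=
  ⟨fun i => a * x.1 i, fun i => mul_nonneg ha (x.2 i)⟩

/-- A relation on `ℝ₊^L` is homothetic if `x ≽ y ↔ αx ≽ αy` for every real `α > 0`. -/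
def Homothetic {L : ℕ} (R : Orth L → Orth L → Prop) : Prop :=
  ∀ (x y : Orth L) (a : ℝ) (ha : 0 < a), R x y ↔ R (oscale a ha.le x) (oscale a ha.le y)

/-- A relation on `ℝ₊^L` is monotone if `x ≥ y` componentwise implies `x ≽ y`,
strictly so when moreover `x ≠ y`. -/
def Monotone' {L : ℕ} (R : Orth L → Orth L → Prop) : Prop :=
  ∀ x y : Orth L, (∀ i, y.1 i ≤ x.1 i) → (R x y ∧ (x ≠ y → StrictRel R x y))

namespace HMPE

lemma oscale_oscale {L : ℕ} (a b : ℝ) (ha : 0 ≤ a) (hb : 0 ≤ b) (x : Orth L) :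
    oscale a ha (oscale b hb x) = oscale (a * b) (mul_nonneg ha hb) x := by
  apply Subtype.ext
  funext i
  simp [oscale, mul_assoc]

lemma oscale_one {L : ℕ} (x : Orth L) : oscale 1 zero_le_one x = x := by
  apply Subtype.ext
  funext i
  simp [oscale]

lemma oscale_irrel {L : ℕ} (a : ℝ) (h h' : 0 ≤ a) (x : Orth L) :
    oscale a h x = oscale a h' x := rfl

lemma oscale_eq_one {L : ℕ} {c : ℝ} (hc : c = 1) (h : 0 ≤ c) (v : Orth L) :
    oscale c h v = v := by subst hc; exact oscale_one v

variable {L : ℕ} (R : Orth L → Orth L → Prop)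

/-- The collection of "good" extensions, as sets of pairs. -/
def Good (S : Set (Orth L × Orth L)) : Prop :=
  (∀ z w, R z w → (z, w) ∈ S) ∧
  Reflexive (fun z w : Orth L => (z, w) ∈ S) ∧
  Transitive (fun z w : Orth L => (z, w) ∈ S) ∧
  Homothetic (fun z w : Orth L => (z, w) ∈ S) ∧
  Monotone' (fun z w : Orth L => (z, w) ∈ S) ∧
  (∀ z w, StrictRel R z w → (w, z) ∉ S)

end HMPE

open HMPE in
/-- Every homothetic preorder on `ℝ₊^L` extending the componentwise order extends to a
homothetic and monotone complete preorder. -/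
theorem homothetic_monotone_preorder_extension (L : ℕ) (hL : 0 < L)
    (R : Orth L → Orth L → Prop) (hrefl : Reflexive R) (htrans : Transitive R)
    (hhom : Homothetic R) (hmono : Monotone' R) :
    ∃ R' : Orth L → Orth L → Prop, IsExtension R R' ∧ Reflexive R' ∧ Transitive R' ∧
      (∀ x y, R' x y ∨ R' y x) ∧ Homothetic R' ∧ Monotone' R' := by
  classical
  -- base element of the Zorn family
  set S₀ : Set (Orth L × Orth L) := {p | R p.1 p.2} with hS₀
  have hS₀good : Good R S₀ :=
    ⟨fun z w h => h, hrefl, htrans, hhom, hmono, fun z w h hc => h.2 hc⟩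
  -- Zorn's lemma
  obtain ⟨M, hM0, hMgood, hMmax⟩ :
      ∃ M, S₀ ⊆ M ∧ Good R M ∧ ∀ S, Good R S → M ⊆ S → S ⊆ M := by
    have hub : ∀ c ⊆ {S | Good R S}, IsChain (· ⊆ ·) c → c.Nonempty →
        ∃ ub ∈ {S | Good R S}, ∀ s ∈ c, s ⊆ ub := by
      intro c hcsub hchain hcne
      refine ⟨⋃₀ c, ?_, fun s hs => Set.subset_sUnion_of_mem hs⟩
      obtain ⟨s₀, hs₀⟩ := hcne
      refine ⟨?_, ?_, ?_, ?_, ?_, ?_⟩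
      · intro z w h
        exact Set.subset_sUnion_of_mem hs₀ ((hcsub hs₀).1 z w h)
      · intro z
        exact Set.subset_sUnion_of_mem hs₀ ((hcsub hs₀).2.1 z)
      · rintro a b d ⟨s, hs, hab⟩ ⟨t, ht, hbd⟩
        rcases hchain.total hs ht with h | h
        · exact Set.subset_sUnion_of_mem ht ((hcsub ht).2.2.1 (h hab) hbd)
        · exact Set.subset_sUnion_of_mem hs ((hcsub hs).2.2.1 hab (h hbd))
      · intro z w a ha
        constructor
        · rintro ⟨s, hs, hzw⟩
          exact Set.subset_sUnion_of_mem hs (((hcsub hs).2.2.2.1 z w a ha).1 hzw)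
        · rintro ⟨s, hs, hzw⟩
          exact Set.subset_sUnion_of_mem hs (((hcsub hs).2.2.2.1 z w a ha).2 hzw)
      · intro z w h
        refine ⟨Set.subset_sUnion_of_mem hs₀ (((hcsub hs₀).2.2.2.2.1 z w h).1), ?_⟩
        intro hne
        refine ⟨Set.subset_sUnion_of_mem hs₀ (((hcsub hs₀).2.2.2.2.1 z w h).1), ?_⟩
        rintro ⟨s, hs, hwz⟩
        exact ((((hcsub hs).2.2.2.2.1 z w h).2 hne).2) hwz
      · rintro z w hzw ⟨s, hs, hwz⟩
        exact (hcsub hs).2.2.2.2.2 z w hzw hwz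
    obtain ⟨M, hM0, hMmax⟩ := zorn_subset_nonempty {S | Good R S} hub S₀ hS₀good
    exact ⟨M, hM0, hMmax.1, fun S hS hMS => hMmax.2 hS hMS⟩
  obtain ⟨hMR, hMrefl, hMtrans, hMhom, hMmono, hMstr⟩ := hMgood
  -- Main claim: M is total.
  have htotal : ∀ x y : Orth L, (x, y) ∈ M ∨ (y, x) ∈ M := by
    intro x y
    by_contra hcon
    push_neg at hcon
    obtain ⟨hxy, hyx⟩ := hcon
    -- auxiliary: scaled comparisons between y and x force strict scale decrease
    have haux : ∀ a b : ℝ, (ha : 0 < a) → (hb : 0 < b) →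
        (oscale b hb.le y, oscale a ha.le x) ∈ M → a < b := by
      intro a b ha hb h
      by_contra hab
      push_neg at hab -- b ≤ a
      have hbinv : (0:ℝ) < b⁻¹ := by positivity
      have h2 := (hMhom (oscale b hb.le y) (oscale a ha.le x) b⁻¹ hbinv).1 h
      rw [oscale_oscale, oscale_oscale] at h2
      have hb1 : b⁻¹ * b = 1 := inv_mul_cancel₀ hb.ne'
      rw [oscale_eq_one hb1 (by positivity) y] at h2
      -- now (y, oscale (b⁻¹*a) x) ∈ M with b⁻¹*a ≥ 1
      have hc1 : (1:ℝ) ≤ b⁻¹ * a := by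
        rw [← hb1]
        exact mul_le_mul_of_nonneg_left hab hbinv.le
      have hdom : ∀ i, x.1 i ≤ (oscale (b⁻¹ * a) (by positivity) x).1 i := by
        intro i
        simpa [oscale] using le_mul_of_one_le_left (x.2 i) hc1
      have h3 : (oscale (b⁻¹ * a) (by positivity : (0:ℝ) ≤ b⁻¹ * a) x, x) ∈ M :=
        (hMmono _ x hdom).1
      exact hyx (hMtrans h2 h3)
    -- the one-step relation and its transitive closure
    set Q : Orth L → Orth L → Prop := fun z w =>
      (z, w) ∈ M ∨ ∃ α : ℝ, ∃ hα : 0 < α, z = oscale α hα.le x ∧ w = oscale α hα.le y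
      with hQ
    set S₂ : Set (Orth L × Orth L) := {p | Relation.TransGen Q p.1 p.2} with hS₂
    -- Q scales
    have hQscale : ∀ (a : ℝ) (ha : 0 < a) (z w : Orth L), Q z w →
        Q (oscale a ha.le z) (oscale a ha.le w) := by
      intro a ha z w hq
      rcases hq with h | ⟨α, hα, rfl, rfl⟩
      · exact Or.inl ((hMhom z w a ha).1 h)
      · refine Or.inr ⟨a * α, by positivity, ?_, ?_⟩
        · rw [oscale_oscale]
        · rw [oscale_oscale]
    have hS₂scale : ∀ (a : ℝ) (ha : 0 < a) (z w : Orth L),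
        Relation.TransGen Q z w →
        Relation.TransGen Q (oscale a ha.le z) (oscale a ha.le w) := by
      intro a ha z w h
      induction h with
      | single h => exact Relation.TransGen.single (hQscale a ha _ _ h)
      | tail _ h ih => exact ih.tail (hQscale a ha _ _ h)
    -- key structural lemma
    have hKL : ∀ z w : Orth L, Relation.TransGen Q z w →
        (z, w) ∈ M ∨ ∃ a b : ℝ, ∃ ha : 0 < a, ∃ hb : 0 < b, b ≤ a ∧
          (z, oscale a ha.le x) ∈ M ∧ (oscale b hb.le y, w) ∈ M := by
      intro z w h
      induction h with
      | single h =>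
        rcases h with h | ⟨α, hα, rfl, rfl⟩
        · exact Or.inl h
        · exact Or.inr ⟨α, α, hα, hα, le_refl α, hMrefl _, hMrefl _⟩
      | tail _ hstep ih =>
        rename_i m w' _
        rcases ih with ih | ⟨a, b, ha, hb, hba, hza, hbw⟩
        · rcases hstep with h | ⟨α, hα, rfl, rfl⟩
          · exact Or.inl (hMtrans ih h)
          · exact Or.inr ⟨α, α, hα, hα, le_refl α, ih, hMrefl _⟩
        · rcases hstep with h | ⟨α, hα, rfl, rfl⟩
          · exact Or.inr ⟨a, b, ha, hb, hba, hza, hMtrans hbw h⟩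
          · -- (oscale b y, oscale α x) ∈ M, so α < b ≤ a
            have hlt : α < b := haux α b hα hb hbw
            exact Or.inr ⟨a, α, ha, hα, le_of_lt (lt_of_lt_of_le hlt hba),
              hza, hMrefl _⟩
    -- no cycles against strict M-pairs
    have hnoRev : ∀ z w : Orth L, (z, w) ∈ M → (w, z) ∉ M →
        ¬ Relation.TransGen Q w z := by
      intro z w hzw hwz h
      rcases hKL w z h with h' | ⟨a, b, ha, hb, hba, hwa, hbz⟩
      · exact hwz h'
      · -- oscale b y → z → w → oscale a x, so a < b, contradiction with b ≤ a
        have : (oscale b hb.le y, oscale a ha.le x) ∈ M :=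
          hMtrans (hMtrans hbz hzw) hwa
        exact absurd (haux a b ha hb this) (not_lt.2 hba)
    -- S₂ is good
    have hS₂good : Good R S₂ := by
      refine ⟨?_, ?_, ?_, ?_, ?_, ?_⟩
      · intro z w h
        exact Relation.TransGen.single (Or.inl (hMR z w h))
      · intro z
        exact Relation.TransGen.single (Or.inl (hMrefl z))
      · intro a b c h1 h2
        exact Relation.TransGen.trans h1 h2
      · intro z w a ha
        constructor
        · intro h; exact hS₂scale a ha z w h
        · intro h
          have hinv : (0:ℝ) < a⁻¹ := by positivity
          have := hS₂scale a⁻¹ hinv _ _ h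
          rw [oscale_oscale, oscale_oscale] at this
          have h1 : a⁻¹ * a = 1 := inv_mul_cancel₀ ha.ne'
          rwa [oscale_eq_one h1 (by positivity) z, oscale_eq_one h1 (by positivity) w] at this
      · intro z w hdom
        obtain ⟨h1, h2⟩ := hMmono z w hdom
        refine ⟨Relation.TransGen.single (Or.inl h1), ?_⟩
        intro hne
        obtain ⟨_, hns⟩ := h2 hne
        exact ⟨Relation.TransGen.single (Or.inl h1), hnoRev z w h1 hns⟩
      · intro z w hzw
        have h1 : (z, w) ∈ M := hMR z w hzw.1
        have h2 : (w, z) ∉ M := hMstr z w hzw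
        exact hnoRev z w h1 h2
    -- contradiction with maximality
    have hsub : M ⊆ S₂ := by
      rintro ⟨z, w⟩ h
      exact Relation.TransGen.single (Or.inl h)
    have hxyS₂ : (x, y) ∈ S₂ := by
      refine Relation.TransGen.single (Or.inr ⟨1, one_pos, ?_, ?_⟩)
      · exact (oscale_one x).symm
      · exact (oscale_one y).symm
    exact hxy (hMmax S₂ hS₂good hsub hxyS₂)
  -- conclude
  refine ⟨fun z w => (z, w) ∈ M, ⟨fun z w h => hMR z w h, ?_⟩, hMrefl, hMtrans,
    htotal, hMhom, hMmono⟩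
  intro z w h
  exact ⟨hMR z w h.1, hMstr z w h⟩
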